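/- arXiv:1412.7591 — 2 statements merged into one kernel-verified Lean document; each statement's English description precedes it below -/
import Mathlib

section
/- In the pre-Bloch group P(C), for all a, b in C \ {0,1} with ab ≠ 1, one has [ab] = [a] + [b] + [(1-a)/(1-b^{-1})] + [(1-b)/(1-a^{-1})]. -/
/-- The set of "admissible" generators: elements of `F \ {0,1}`. -/
abbrev PBG (F : Type*) [Field F] : Type _ := {z : F // z ≠ 0 ∧ z ≠ 1}

/-- The subgroup of five-term relations in the free abelian group on `F \ {0,1}`. -/
def fiveTermRels (F : Type*) [Field F] : AddSubgroup (FreeAbelianGroup (PBG F)) :=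
  AddSubgroup.closure
    { r | ∃ x y a b c : PBG F, x ≠ y ∧
        (a : F) = (y : F) / (x : F) ∧
        (b : F) = (1 - (x : F)⁻¹) / (1 - (y : F)⁻¹) ∧
        (c : F) = (1 - (x : F)) / (1 - (y : F)) ∧
        r = FreeAbelianGroup.of x - FreeAbelianGroup.of y + FreeAbelianGroup.of a
            - FreeAbelianGroup.of b + FreeAbelianGroup.of c }

/-- The pre-Bloch group `P(F)`. -/
abbrev preBloch (F : Type*) [Field F] :=
  FreeAbelianGroup (PBG F) ⧸ fiveTermRels F

/-- The class `[z]` of a generator in the pre-Bloch group. -/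
def pb {F : Type*} [Field F] (z : PBG F) : preBloch F :=
  QuotientAddGroup.mk (FreeAbelianGroup.of z)

/-!
With `x = a⁻¹` and `y = b` the five-term relation reads `[a⁻¹] - [b] + [ab] - [p] + [q⁻¹] = 0`,
since `y / x = ab`, `(1 - x⁻¹) / (1 - y⁻¹) = p` and `(1 - x) / (1 - y) = q⁻¹`. The inversion relation
`[z⁻¹] = -[z]`, obtained from a square root of `z`, turns this into the claim.
-/

namespace PBG

variable {F : Type*} [Field F]

def inv (z : PBG F) : PBG F :=
  ⟨(z : F)⁻¹, inv_ne_zero z.2.1, fun h => z.2.2 (inv_eq_one.mp h)⟩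

@[simp]
lemma coe_inv (z : PBG F) : (z.inv : F) = (z : F)⁻¹ := rfl

end PBG

section Field

variable {F : Type*} [Field F]

lemma pb_five_term (x y a b c : PBG F) (hxy : x ≠ y)
    (ha : (a : F) = (y : F) / (x : F))
    (hb : (b : F) = (1 - (x : F)⁻¹) / (1 - (y : F)⁻¹))
    (hc : (c : F) = (1 - (x : F)) / (1 - (y : F))) :
    pb x - pb y + pb a - pb b + pb c = 0 :=
  (QuotientAddGroup.eq_zero_iff _).mpr <|
    AddSubgroup.subset_closure ⟨x, y, a, b, c, hxy, ha, hb, hc, rfl⟩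

/-- Adding the five-term relations for `(s, s⁻¹)` and `(s⁻¹, s)`, the terms `[s]`, `[s⁻¹]`, `[-s]`,
`[-s⁻¹]` cancel and `[s⁻²] + [s²] = 0` remains. -/
lemma pb_inv_of_sq_eq (z : PBG F) (s : F) (hs : s ^ 2 = z) : pb z.inv = -pb z := by
  obtain ⟨hz0, hz1⟩ := z.2
  have hs0 : s ≠ 0 := by rintro rfl; simp_all
  have hs1 : s ≠ 1 := by rintro rfl; simp_all
  have hsn1 : s ≠ -1 := by rintro rfl; simp_all
  have hns1 : -s ≠ 1 := fun h => hsn1 (by linear_combination -h)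
  set S : PBG F := ⟨s, hs0, hs1⟩
  set N : PBG F := ⟨-s, neg_ne_zero.mpr hs0, hns1⟩
  have hS : S ≠ S.inv := by
    intro h
    have hss : s = s⁻¹ := congrArg Subtype.val h
    apply hz1
    rw [← hs, pow_two]
    nth_rewrite 2 [hss]
    exact mul_inv_cancel₀ hs0
  have h1 := pb_five_term S S.inv z.inv N.inv N hS
    (by simp [S, ← hs]; field_simp) (by simp [S, N]; field_simp; ring)
    (by simp [S, N]; field_simp; ring)
  have h2 := pb_five_term S.inv S z N N.inv (Ne.symm hS)
    (by simp [S, ← hs]; field_simp) (by simp [S, N]; field_simp; ring)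
    (by simp [S, N]; field_simp; ring)
  linear_combination (norm := abel) h1 + h2

end Field

section IsAlgClosed

variable {F : Type*} [Field F] [IsAlgClosed F]

lemma pb_inv (z : PBG F) : pb z.inv = -pb z :=
  have ⟨s, hs⟩ := IsAlgClosed.exists_pow_nat_eq (z : F) two_pos
  pb_inv_of_sq_eq z s hs

lemma pb_mul (a b ab p q : PBG F) (hab1 : (a : F) * (b : F) ≠ 1)
    (hab : (ab : F) = (a : F) * (b : F))
    (hp : (p : F) = (1 - (a : F)) / (1 - (b : F)⁻¹))
    (hq : (q : F) = (1 - (b : F)) / (1 - (a : F)⁻¹)) :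
    pb ab = pb a + pb b + pb p + pb q := by
  have hne : a.inv ≠ b := by
    intro h
    apply hab1
    rw [← congrArg Subtype.val h, PBG.coe_inv, mul_inv_cancel₀ a.2.1]
  have h := pb_five_term a.inv b ab p q.inv hne
    (by rw [hab, PBG.coe_inv, div_inv_eq_mul, mul_comm])
    (by rw [hp, PBG.coe_inv, inv_inv]) (by rw [PBG.coe_inv, hq, inv_div, PBG.coe_inv])
  rw [pb_inv, pb_inv] at h
  linear_combination (norm := abel) h

end IsAlgClosed

/-- In `P(ℂ)`, for `a, b ∈ ℂ \ {0,1}` with `ab ≠ 1`: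
`[ab] = [a] + [b] + [(1-a)/(1-b⁻¹)] + [(1-b)/(1-a⁻¹)]`. -/
theorem preBloch_prod (a b ab p q : PBG ℂ)
    (hab1 : (a : ℂ) * (b : ℂ) ≠ 1)
    (hab : (ab : ℂ) = (a : ℂ) * (b : ℂ))
    (hp : (p : ℂ) = (1 - (a : ℂ)) / (1 - (b : ℂ)⁻¹))
    (hq : (q : ℂ) = (1 - (b : ℂ)) / (1 - (a : ℂ)⁻¹)) :
    pb ab = pb a + pb b + pb p + pb q :=
  pb_mul a b ab p q hab1 hab hp hq
end

section
/- Let T be a very generic tetrahedron of flags with edge coordinates z_{ij} and let T* be its dual with edge coordinates z*_{ij}. Then for every partition {i,j,k,l} = {1,2,3,4}, one has z*_{ij} z*_{ji} = z_{kl} z_{lk}. -/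
/-- Pairing of a covector and a vector in `ℂ³`. -/
noncomputable def dot (f x : Fin 3 → ℂ) : ℂ := ∑ t, f t * x t

/-- Determinant of three vectors of `ℂ³` (as rows). -/
noncomputable def det3 (a b c : Fin 3 → ℂ) : ℂ := Matrix.det (Matrix.of ![a, b, c])

/-- A generic tetrahedron of flags in `ℂP²`: four points `[xᵢ]` and four
lines `[fᵢ]` with `fᵢ(xᵢ) = 0`, `fᵢ(xⱼ) ≠ 0` for `i ≠ j`, and no three of
the points collinear. -/
structure FlagTetra where
  x : Fin 4 → Fin 3 → ℂ
  f : Fin 4 → Fin 3 → ℂ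
  flag : ∀ i, dot (f i) (x i) = 0
  generic_pairing : ∀ i j, i ≠ j → dot (f i) (x j) ≠ 0
  generic_pts : ∀ i j k : Fin 4, i ≠ j → j ≠ k → i ≠ k → det3 (x i) (x j) (x k) ≠ 0

/-- A very generic tetrahedron of flags: in addition no three of the
lines `[fᵢ]` are concurrent. -/
structure VGTetra extends FlagTetra where
  generic_lines : ∀ i j k : Fin 4, i ≠ j → j ≠ k → i ≠ k → det3 (f i) (f j) (f k) ≠ 0

/-- The edge coordinate `z_{ij}(T)`, computed with respect to an even
permutation `(i,j,k,l)` of the vertices: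
`z_{ij} = (fᵢ(x_k)·det(xᵢ,xⱼ,x_l)) / (fᵢ(x_l)·det(xᵢ,xⱼ,x_k))`. -/
noncomputable def zEdge (T : FlagTetra) (i j k l : Fin 4) : ℂ :=
  (dot (T.f i) (T.x k) * det3 (T.x i) (T.x j) (T.x l)) /
    (dot (T.f i) (T.x l) * det3 (T.x i) (T.x j) (T.x k))

/-- The face coordinate (triple ratio) `z_{ijk}(T)`. -/
noncomputable def zFace (T : FlagTetra) (i j k : Fin 4) : ℂ :=
  (dot (T.f i) (T.x j) * dot (T.f j) (T.x k) * dot (T.f k) (T.x i)) /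
    (dot (T.f i) (T.x k) * dot (T.f j) (T.x i) * dot (T.f k) (T.x j))

/-- The edge coordinate `z*_{ij}` of the dual tetrahedron `T*`, obtained by
replacing each flag `([x],[f])` by `([f],[x])` in the dual projective plane. -/
noncomputable def zEdgeDual (T : FlagTetra) (i j k l : Fin 4) : ℂ :=
  (dot (T.f k) (T.x i) * det3 (T.f i) (T.f j) (T.f l)) /
    (dot (T.f l) (T.x i) * det3 (T.f i) (T.f j) (T.f k))

/-!
Both products equal the cross-ratio `fₖ(xᵢ) f_l(xⱼ) / (fₖ(xⱼ) f_l(xᵢ))` of pairings: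
in each product the two determinants of the first factor reappear in the second one
with two rows swapped, so they cancel.
-/

lemma det3_swap (a b c : Fin 3 → ℂ) : det3 b a c = -det3 a b c := by
  simp only [det3, Matrix.det_fin_three, Matrix.of_apply, Matrix.cons_val_zero,
    Matrix.cons_val_one, Matrix.cons_val_two, Matrix.head_cons, Matrix.tail_cons]
  ring

lemma mul_div_mul_neg_div_mul_neg {K : Type*} [Field K] {a b c e d₁ d₂ : K} (h₁ : d₁ ≠ 0) (h₂ : d₂ ≠ 0) :
    a * d₁ / (b * d₂) * (c * -d₂ / (e * -d₁)) = a * c / (b * e) := by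
  field_simp

noncomputable def pairingCrossRatio (T : FlagTetra) (i j k l : Fin 4) : ℂ :=
  dot (T.f k) (T.x i) * dot (T.f l) (T.x j) / (dot (T.f k) (T.x j) * dot (T.f l) (T.x i))

lemma zEdgeDual_mul_zEdgeDual_swap (T : FlagTetra) {i j k l : Fin 4}
    (hk : det3 (T.f i) (T.f j) (T.f k) ≠ 0) (hl : det3 (T.f i) (T.f j) (T.f l) ≠ 0) :
    zEdgeDual T i j k l * zEdgeDual T j i l k = pairingCrossRatio T i j k l := by
  rw [zEdgeDual, zEdgeDual, det3_swap (T.f i), det3_swap (T.f i),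
    mul_div_mul_neg_div_mul_neg hl hk, pairingCrossRatio, mul_comm (dot (T.f l) (T.x i))]

lemma zEdge_mul_zEdge_swap (T : FlagTetra) {i j k l : Fin 4}
    (hi : det3 (T.x k) (T.x l) (T.x i) ≠ 0) (hj : det3 (T.x k) (T.x l) (T.x j) ≠ 0) :
    zEdge T k l i j * zEdge T l k j i = pairingCrossRatio T i j k l := by
  rw [zEdge, zEdge, det3_swap (T.x k), det3_swap (T.x k),
    mul_div_mul_neg_div_mul_neg hj hi, pairingCrossRatio]

theorem zEdgeDual_mul_general (T : VGTetra) (σ : Equiv.Perm (Fin 4)) :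
    zEdgeDual T.toFlagTetra (σ 0) (σ 1) (σ 2) (σ 3) *
      zEdgeDual T.toFlagTetra (σ 1) (σ 0) (σ 3) (σ 2) =
    zEdge T.toFlagTetra (σ 2) (σ 3) (σ 0) (σ 1) *
      zEdge T.toFlagTetra (σ 3) (σ 2) (σ 1) (σ 0) := by
  have lines {a b c : Fin 4} (hab : a ≠ b) (hbc : b ≠ c) (hac : a ≠ c) :
      det3 (T.f (σ a)) (T.f (σ b)) (T.f (σ c)) ≠ 0 :=
    T.generic_lines _ _ _ (σ.injective.ne hab) (σ.injective.ne hbc) (σ.injective.ne hac)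
  have pts {a b c : Fin 4} (hab : a ≠ b) (hbc : b ≠ c) (hac : a ≠ c) :
      det3 (T.x (σ a)) (T.x (σ b)) (T.x (σ c)) ≠ 0 :=
    T.generic_pts _ _ _ (σ.injective.ne hab) (σ.injective.ne hbc) (σ.injective.ne hac)
  rw [zEdgeDual_mul_zEdgeDual_swap _ (lines (by decide) (by decide) (by decide))
      (lines (by decide) (by decide) (by decide)),
    zEdge_mul_zEdge_swap _ (pts (by decide) (by decide) (by decide))
      (pts (by decide) (by decide) (by decide))]

/-- For a very generic tetrahedron of flags and its dual,
`z*_{ij} z*_{ji} = z_{kl} z_{lk}` for every partition `{i,j,k,l}` of the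
four vertices. -/
theorem zEdgeDual_mul (T : VGTetra) (σ : Equiv.Perm (Fin 4)) (hσ : σ.sign = 1) :
    zEdgeDual T.toFlagTetra (σ 0) (σ 1) (σ 2) (σ 3) *
      zEdgeDual T.toFlagTetra (σ 1) (σ 0) (σ 3) (σ 2) =
    zEdge T.toFlagTetra (σ 2) (σ 3) (σ 0) (σ 1) *
      zEdge T.toFlagTetra (σ 3) (σ 2) (σ 1) (σ 0) :=
  zEdgeDual_mul_general T σ
end
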